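/- Token membership invariant: for every context-free grammar G, local lexing ℓℓ = (Lex, Sel), input D ∈ Σ*, position k ∈ {0,…,|D|}, stage u ≥ 0, and every path p ∈ 𝒫ₖ^u, every token p_i of p (0 ≤ i < |p|) satisfies p_i ∈ 𝒳_{|p̄₀…p̄_{i-1}|}; that is, every token occurring in a produced path is lexed by Lex at the position where it occurs. -/

import Mathlib

/-! A path only grows by appending a token of `𝒵ₖᵘ` to a path whose characters have length `k`.
Since `Sel(A, B) ⊆ B`, induction on `u` gives `𝒵ₖᵘ ⊆ 𝒲ₖᵘ ⊆ 𝒳ₖ`, so every appended token is lexed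
at the position where it lands. The invariant holds for `ε` and survives each such step. -/

namespace LL
section Defs

/-- A context-free grammar `(𝔑, 𝔗, ℜ, 𝔖)`: nonterminals are the type `N`,
terminals the type `T` (automatically disjoint), `rules ⊆ 𝔑 × (𝔑 ∪ 𝔗)*`,
and `start ∈ 𝔑`. -/
structure CFG (N T : Type*) where
  rules : Set (N × List (N ⊕ T))
  start : N

variable {N T C : Type*}

/-- One derivation step `α ⇒ β`. -/
def CFG.Step (G : CFG N T) (α β : List (N ⊕ T)) : Prop :=
  ∃ a A b γ, α = a ++ Sum.inl A :: b ∧ β = a ++ γ ++ b ∧ (A, γ) ∈ G.rules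

/-- `⇒*`, the reflexive transitive closure of `⇒`. -/
def CFG.Derives (G : CFG N T) : List (N ⊕ T) → List (N ⊕ T) → Prop :=
  Relation.ReflTransGen G.Step

/-- `ℒ = { w ∈ 𝔗* | 𝔖 ⇒* w }`. -/
def CFG.lang (G : CFG N T) : Set (List T) :=
  {w | G.Derives [Sum.inl G.start] (w.map Sum.inr)}

/-- `ℒ_prefix = { w ∈ 𝔗* | ∃ α. 𝔖 ⇒* w α }`. -/
def CFG.langPrefix (G : CFG N T) : Set (List T) :=
  {w | ∃ α, G.Derives [Sum.inl G.start] (w.map Sum.inr ++ α)}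

/-- A token is a pair `(t, c) ∈ 𝔗 × Σ*`. -/
abbrev Token (T C : Type*) := T × List C

/-- `p̄`, the characters of a token sequence. -/
def chars (p : List (Token T C)) : List C := (p.map Prod.snd).flatten

/-- `[p]`, the terminals of a token sequence. -/
def terms (p : List (Token T C)) : List T := p.map Prod.fst

/-- `limit f X = ⋃ n, fⁿ(X)`. -/
def limit {α : Type*} (f : Set α → Set α) (X : Set α) : Set α := ⋃ n, f^[n] X

/-- A local lexing `(Lex, Sel)` with respect to terminals `T` and characters `C`. -/
structure LocalLexing (T C : Type*) where
  Lex : T → List C → ℕ → Set (Token T C)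
  Sel : Set (Token T C) → Set (Token T C) → Set (Token T C)
  lex_sound : ∀ t D k, ∀ x ∈ Lex t D k,
      x.1 = t ∧ k + x.2.length ≤ D.length ∧ x.2 <+: D.drop k
  sel_sound : ∀ A B : Set (Token T C), A ⊆ B → A ⊆ Sel A B ∧ Sel A B ⊆ B

variable (G : CFG N T) (ll : LocalLexing T C) (D : List C)

/-- `𝒳ₖ = { x | x ∈ Lex([x])(D, k) }`. -/
def Xtok (k : ℕ) : Set (Token T C) := {x | x ∈ ll.Lex x.1 D k}

/-- `𝒲` of a path set `P` at position `k`: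
`{ x ∈ 𝒳ₖ | ∃ p ∈ P. |p̄| = k ∧ [p x] ∈ ℒ_prefix }`. -/
def Wtok (P : Set (List (Token T C))) (k : ℕ) : Set (Token T C) :=
  {x | x ∈ Xtok ll D k ∧ ∃ p ∈ P, (chars p).length = k ∧ terms (p ++ [x]) ∈ G.langPrefix}

/-- `Appendₖ T P = P ∪ { p t | p ∈ P ∧ |p̄| = k ∧ t ∈ T ∧ [p t] ∈ ℒ_prefix }`. -/
def Append (k : ℕ) (Ts : Set (Token T C)) (P : Set (List (Token T C))) :
    Set (List (Token T C)) :=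
  P ∪ {q | ∃ p ∈ P, ∃ t ∈ Ts, q = p ++ [t] ∧ (chars p).length = k ∧ terms q ∈ G.langPrefix}

/-- The pair `(𝒫ₖᵘ, 𝒵ₖᵘ)`, starting from the path set `P₀` at position `k`:
`𝒵ₖ⁰ = ∅`, `𝒵ₖᵘ⁺¹ = Sel(𝒵ₖᵘ, 𝒲ₖᵘ⁺¹)` and `𝒫ₖᵘ⁺¹ = limit (Appendₖ 𝒵ₖᵘ⁺¹) 𝒫ₖᵘ`. -/
def Pstage (k : ℕ) (P₀ : Set (List (Token T C))) :
    ℕ → Set (List (Token T C)) × Set (Token T C)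
  | 0 => (P₀, ∅)
  | u + 1 =>
      let PZ := Pstage k P₀ u
      let Z := ll.Sel PZ.2 (Wtok G ll D PZ.1 k)
      (limit (Append G k Z) PZ.1, Z)

/-- `𝒫ₖ⁰`:  `𝒫₀⁰ = {ε}` and `𝒫ₖ₊₁⁰ = 𝒫ₖ^∞`. -/
def Pinit : ℕ → Set (List (Token T C))
  | 0 => {[]}
  | k + 1 => ⋃ u, (Pstage G ll D k (Pinit k) u).1

/-- The path sets `𝒫ₖᵘ`. -/
def Pset (k u : ℕ) : Set (List (Token T C)) := (Pstage G ll D k (Pinit G ll D k) u).1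

/-- The selected token sets `𝒵ₖᵘ`. -/
def Zset (k u : ℕ) : Set (Token T C) := (Pstage G ll D k (Pinit G ll D k) u).2

/-- The admissible token sets `𝒲ₖᵘ`. -/
def Wset (k u : ℕ) : Set (Token T C) := Wtok G ll D (Pset G ll D k u) k

/-- `𝒵ₖ^∞ = ⋃ u, 𝒵ₖᵘ`. -/
def Zinf (k : ℕ) : Set (Token T C) := ⋃ u, Zset G ll D k u

/-- `𝕻 = 𝒫_{|D|}^∞`. -/
def PP : Set (List (Token T C)) := ⋃ u, Pset G ll D D.length u

/-- `ℓℓ(D) = { p ∈ 𝕻 | |p̄| = |D| ∧ [p] ∈ ℒ }`. -/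
def sem : Set (List (Token T C)) :=
  {p | p ∈ PP G ll D ∧ (chars p).length = D.length ∧ terms p ∈ G.lang}

/-- An Earley item `(lhs → pre • post, origin, bin)`. -/
structure EItem (N T : Type*) where
  lhs : N
  pre : List (N ⊕ T)
  post : List (N ⊕ T)
  origin : ℕ
  bin : ℕ

/-- `Init = { (𝔖 → • α, 0, 0) | (𝔖 → α) ∈ ℜ }`. -/
def EInit : Set (EItem N T) :=
  {x | ∃ α, (G.start, α) ∈ G.rules ∧ x = ⟨G.start, [], α, 0, 0⟩}

/-- The `Predict` operator. -/
def Predict (k : ℕ) (I : Set (EItem N T)) : Set (EItem N T) :=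
  I ∪ {x | ∃ M γ, (M, γ) ∈ G.rules ∧
        (∃ N' α β i, (⟨N', α, Sum.inl M :: β, i, k⟩ : EItem N T) ∈ I) ∧
        x = ⟨M, [], γ, k, k⟩}

/-- The `Complete` operator. -/
def Complete (k : ℕ) (I : Set (EItem N T)) : Set (EItem N T) :=
  I ∪ {x | ∃ N' α M β i j γ,
        (⟨N', α, Sum.inl M :: β, i, j⟩ : EItem N T) ∈ I ∧
        (⟨M, γ, [], j, k⟩ : EItem N T) ∈ I ∧
        x = ⟨N', α ++ [Sum.inl M], β, i, k⟩}

/-- The token-based `Scan` operator. -/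
def Scan (Ts : Set (Token T C)) (k : ℕ) (I : Set (EItem N T)) : Set (EItem N T) :=
  I ∪ {x | ∃ N' α X c β i, (X, c) ∈ Ts ∧
        (⟨N', α, Sum.inr X :: β, i, k⟩ : EItem N T) ∈ I ∧
        x = ⟨N', α ++ [Sum.inr X], β, i, k + c.length⟩}

/-- `Tokens T k I = Sel(T, { x | ∃ X N α β i. (N → α • X β, i, k) ∈ I ∧ x ∈ Lex(X)(D, k) })`. -/
def Tokens (Ts : Set (Token T C)) (k : ℕ) (I : Set (EItem N T)) : Set (Token T C) :=
  ll.Sel Ts {x | ∃ X N' α β i, (⟨N', α, Sum.inr X :: β, i, k⟩ : EItem N T) ∈ I ∧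
        x ∈ ll.Lex X D k}

/-- `πₖ T I = limit (Scan T k ∘ Complete k ∘ Predict k) I`. -/
def pik (Ts : Set (Token T C)) (k : ℕ) (I : Set (EItem N T)) : Set (EItem N T) :=
  limit (fun J => Scan Ts k (Complete k (Predict G k J))) I

/-- The pair `(𝔍ₖᵘ, 𝒯ₖᵘ)`, starting from the item set `J₀` at position `k`:
`𝒯ₖ⁰ = ∅`, `𝒯ₖᵘ⁺¹ = Tokens 𝒯ₖᵘ k 𝔍ₖᵘ` and `𝔍ₖᵘ⁺¹ = πₖ 𝒯ₖᵘ⁺¹ 𝔍ₖᵘ`. -/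
def Jstage (k : ℕ) (J₀ : Set (EItem N T)) : ℕ → Set (EItem N T) × Set (Token T C)
  | 0 => (J₀, ∅)
  | u + 1 =>
      let JT := Jstage k J₀ u
      let T' := Tokens ll D JT.2 k JT.1
      (pik G T' k JT.1, T')

/-- `𝔍ₖ⁰`:  `𝔍₀⁰ = π₀ ∅ Init` and `𝔍ₖ₊₁⁰ = πₖ₊₁ ∅ 𝓘ₖ`. -/
def Jinit : ℕ → Set (EItem N T)
  | 0 => pik G (∅ : Set (Token T C)) 0 (EInit G)
  | k + 1 => pik G (∅ : Set (Token T C)) (k + 1) (⋃ u, (Jstage G ll D k (Jinit k) u).1)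

/-- The item sets `𝔍ₖᵘ`. -/
def Jset (k u : ℕ) : Set (EItem N T) := (Jstage G ll D k (Jinit G ll D k) u).1

/-- The token sets `𝒯ₖᵘ`. -/
def Tset (k u : ℕ) : Set (Token T C) := (Jstage G ll D k (Jinit G ll D k) u).2

/-- `𝓘ₖ = ⋃ u, 𝔍ₖᵘ`. -/
def Ibin (k : ℕ) : Set (EItem N T) := ⋃ u, Jset G ll D k u

/-- `𝕴 = 𝓘_{|D|}`. -/
def Items : Set (EItem N T) := Ibin G ll D D.length

/-- An item `(N → α • β, i, j)` is `p`-valid. -/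
def pValid (p : List (Token T C)) (x : EItem N T) : Prop :=
  (x.lhs, x.pre ++ x.post) ∈ G.rules ∧
  ∃ u ≤ p.length, ∃ γ,
    (chars p).length = x.bin ∧
    (chars (p.take u)).length = x.origin ∧
    G.Derives [Sum.inl G.start] ((terms (p.take u)).map Sum.inr ++ Sum.inl x.lhs :: γ) ∧
    G.Derives x.pre ((terms (p.drop u)).map Sum.inr)

/-- `⟨P⟩ = { x | ∃ p ∈ P. x is p-valid }`. -/
def Gen (P : Set (List (Token T C))) : Set (EItem N T) :=
  {x | ∃ p ∈ P, pValid G p x}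

theorem limit_subset {α : Type*} {f : Set α → Set α} {S X : Set α}
    (hf : ∀ Y ⊆ S, f Y ⊆ S) (hX : X ⊆ S) : limit f X ⊆ S := by
  refine Set.iUnion_subset fun n => ?_
  induction n with
  | zero => exact hX
  | succ n ih => exact Function.iterate_succ_apply' f n X ▸ hf _ ih

section LexedPaths

def IsLexedPath (p : List (Token T C)) : Prop :=
  ∀ i (hi : i < p.length), p[i] ∈ Xtok ll D (chars (p.take i)).length

variable {G ll D}

theorem isLexedPath_nil : IsLexedPath ll D ([] : List (Token T C)) :=
  fun _ hi => absurd hi (Nat.not_lt_zero _)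

theorem IsLexedPath.concat {p : List (Token T C)} {t : Token T C} (hp : IsLexedPath ll D p)
    (ht : t ∈ Xtok ll D (chars p).length) : IsLexedPath ll D (p ++ [t]) := by
  intro i hi
  rw [List.length_append, List.length_singleton] at hi
  rcases (Nat.lt_succ_iff.mp hi).lt_or_eq with hlt | rfl
  · rw [List.getElem_append_left hlt, List.take_append_of_le_length hlt.le]
    exact hp i hlt
  · rwa [List.getElem_concat_length rfl, List.take_left' rfl]

theorem append_subset_setOf_isLexedPath {k : ℕ} {Z : Set (Token T C)}
    (hZ : Z ⊆ Xtok ll D k) {P : Set (List (Token T C))} (hP : P ⊆ {p | IsLexedPath ll D p}) :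
    Append G k Z P ⊆ {p | IsLexedPath ll D p} := by
  rintro q (hq | ⟨p, hp, t, ht, rfl, hlen, -⟩)
  · exact hP hq
  · exact (hP hp).concat (hlen ▸ hZ ht)

theorem wtok_mono {k : ℕ} {P Q : Set (List (Token T C))} (h : P ⊆ Q) :
    Wtok G ll D P k ⊆ Wtok G ll D Q k :=
  fun _ ⟨hx, p, hp, hlen, hpre⟩ => ⟨hx, p, h hp, hlen, hpre⟩

theorem pstage_fst_subset_succ {k : ℕ} {P₀ : Set (List (Token T C))} (u : ℕ) :
    (Pstage G ll D k P₀ u).1 ⊆ (Pstage G ll D k P₀ (u + 1)).1 :=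
  fun _ hp => Set.mem_iUnion.mpr ⟨0, hp⟩

theorem pstage_snd_subset_wtok {k : ℕ} {P₀ : Set (List (Token T C))} (u : ℕ) :
    (Pstage G ll D k P₀ u).2 ⊆ Wtok G ll D (Pstage G ll D k P₀ u).1 k := by
  induction u with
  | zero => exact Set.empty_subset _
  | succ u ih => exact (ll.sel_sound _ _ ih).2.trans (wtok_mono (pstage_fst_subset_succ u))

theorem pstage_fst_subset_setOf_isLexedPath {k : ℕ} {P₀ : Set (List (Token T C))}
    (hP₀ : P₀ ⊆ {p | IsLexedPath ll D p}) (u : ℕ) :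
    (Pstage G ll D k P₀ u).1 ⊆ {p | IsLexedPath ll D p} := by
  induction u with
  | zero => exact hP₀
  | succ u ih =>
    have hZ : (Pstage G ll D k P₀ (u + 1)).2 ⊆ Xtok ll D k :=
      fun _ hx => (pstage_snd_subset_wtok (u + 1) hx).1
    exact limit_subset (fun _ => append_subset_setOf_isLexedPath hZ) ih

theorem pinit_subset_setOf_isLexedPath (k : ℕ) :
    Pinit G ll D k ⊆ {p | IsLexedPath ll D p} := by
  induction k with
  | zero => exact Set.singleton_subset_iff.mpr isLexedPath_nil
  | succ k ih => exact Set.iUnion_subset (pstage_fst_subset_setOf_isLexedPath ih)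

end LexedPaths

theorem token_membership_general {N T C : Type*} (G : CFG N T) (ll : LocalLexing T C)
    (D : List C) (k : ℕ) (u : ℕ)
    (p : List (Token T C)) (hp : p ∈ Pset G ll D k u)
    (i : ℕ) (hi : i < p.length) :
    p[i] ∈ Xtok ll D (chars (p.take i)).length :=
  pstage_fst_subset_setOf_isLexedPath (pinit_subset_setOf_isLexedPath k) u hp i hi

/-- Token membership invariant: every token occurring in a produced path is lexed by
`Lex` at the position where it occurs: `pᵢ ∈ 𝒳_{|p̄₀…p̄ᵢ₋₁|}` for every `p ∈ 𝒫ₖᵘ`. -/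
theorem token_membership {N T C : Type*} (G : CFG N T) (ll : LocalLexing T C)
    (D : List C) (k : ℕ) (hk : k ≤ D.length) (u : ℕ)
    (p : List (Token T C)) (hp : p ∈ Pset G ll D k u)
    (i : ℕ) (hi : i < p.length) :
    p[i] ∈ Xtok ll D (chars (p.take i)).length :=
  token_membership_general G ll D k u p hp i hi

end Defs
end LL
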